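/- arXiv:2602.05754 — 4 statements merged into one kernel-verified Lean document; each statement's English description precedes it below -/
import Mathlib

section
/- Lemma D.4 (Second moment of the masked microbatch average). Let N ≥ 1, let (Ω, 𝓕, μ) be a probability space, let M ≥ 1, σ ≥ 0, and let G ∈ ℝ^N. For m = 1, …, M let U_m, g_m : Ω → ℝ^N be measurable random vectors such that: every coordinate of U_m takes values in {0,1}; U_m and g_m are independent; E[g_m] = G; E[‖g_m − G‖²] ≤ σ²; and the pairs make the masked vectors Z_m := U_m ⊙ g_m mutually independent across m. Let Δ := (1/M) Σ_{m=1}^M Z_m. Then E[‖Δ‖²] ≤ (1 + 1/M) ‖G‖² + σ²/M. -/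
/-!
Expanding `‖∑ Z m‖²` into inner products and using pairwise independence on the cross terms gives
`E‖∑ Z m‖² = ‖∑ E[Z m]‖² + ∑ (E‖Z m‖² - ‖E[Z m]‖²)`. A `0/1` mask can only shrink a vector, and,
being independent of `g m`, it shrinks the mean `G` coordinatewise by the factors
`P(U m j = 1) ≤ 1`. Hence `‖E[Z m]‖ ≤ ‖G‖` and `E‖Z m‖² ≤ E‖g m‖² = E‖g m - G‖² + ‖G‖² ≤ σ² + ‖G‖²`,
and dividing by `M²` gives `E‖Δ‖² ≤ ‖G‖² + (σ² + ‖G‖²) / M`.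
-/

open MeasureTheory ProbabilityTheory

/-- Coordinatewise (Hadamard) product on `ℝ^N`. -/
noncomputable def hadamard {N : ℕ} (u v : EuclideanSpace ℝ (Fin N)) :
    EuclideanSpace ℝ (Fin N) :=
  (EuclideanSpace.equiv (Fin N) ℝ).symm (fun j => u j * v j)

section InnerProductSpace

open scoped InnerProductSpace

variable {Ω E : Type*} [MeasurableSpace Ω] {μ : Measure Ω}
  [NormedAddCommGroup E] [InnerProductSpace ℝ E]

lemma norm_sum_sq_eq_sum_sum_inner {ι : Type*} (s : Finset ι) (x : ι → E) :
    ‖∑ i ∈ s, x i‖ ^ 2 = ∑ i ∈ s, ∑ j ∈ s, ⟪x i, x j⟫_ℝ := by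
  rw [← real_inner_self_eq_norm_sq, sum_inner]
  simp_rw [inner_sum]

lemma MeasureTheory.MemLp.integrable_inner {X Y : Ω → E} (hX : MemLp X 2 μ) (hY : MemLp Y 2 μ) :
    Integrable (fun ω => ⟪X ω, Y ω⟫_ℝ) μ :=
  (hX.norm.integrable_mul hY.norm).mono (hX.1.inner hY.1)
    (ae_of_all _ fun ω => by simpa using abs_real_inner_le_norm (X ω) (Y ω))

variable [CompleteSpace E]

lemma integral_norm_sub_integral_sq [IsProbabilityMeasure μ] {X : Ω → E} (hX : MemLp X 2 μ) :
    ∫ ω, ‖X ω - ∫ ω', X ω' ∂μ‖ ^ 2 ∂μ = ∫ ω, ‖X ω‖ ^ 2 ∂μ - ‖∫ ω, X ω ∂μ‖ ^ 2 := by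
  set m := ∫ ω, X ω ∂μ
  have hXint : Integrable X μ := hX.integrable one_le_two
  have hsq : Integrable (fun ω => ‖X ω‖ ^ 2) μ := (memLp_two_iff_integrable_sq_norm hX.1).1 hX
  have hinner : Integrable (fun ω => 2 * ⟪m, X ω⟫_ℝ) μ := (hXint.const_inner m).const_mul 2
  have hdiff : Integrable (fun ω => ‖X ω‖ ^ 2 - 2 * ⟪m, X ω⟫_ℝ) μ := hsq.sub hinner
  simp_rw [norm_sub_sq_real, real_inner_comm m]
  rw [integral_add hdiff (integrable_const _), integral_sub hsq hinner,
    integral_const_mul, integral_inner hXint, real_inner_self_eq_norm_sq]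
  simp
  ring

variable [MeasurableSpace E] [BorelSpace E] [IsFiniteMeasure μ] {ι : Type*} {s : Finset ι}
  {X : ι → Ω → E}

theorem integral_norm_sum_sq_of_pairwise_indepFun (hX : ∀ i ∈ s, MemLp (X i) 2 μ)
    (hindep : Set.Pairwise s fun i j => IndepFun (X i) (X j) μ) :
    ∫ ω, ‖∑ i ∈ s, X i ω‖ ^ 2 ∂μ
      = ‖∑ i ∈ s, ∫ ω, X i ω ∂μ‖ ^ 2
        + ∑ i ∈ s, (∫ ω, ‖X i ω‖ ^ 2 ∂μ - ‖∫ ω, X i ω ∂μ‖ ^ 2) := by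
  classical
  have hcross : ∀ i ∈ s, ∀ j ∈ s, ∫ ω, ⟪X i ω, X j ω⟫_ℝ ∂μ
      = ⟪∫ ω, X i ω ∂μ, ∫ ω, X j ω ∂μ⟫_ℝ
        + if j = i then ∫ ω, ‖X i ω‖ ^ 2 ∂μ - ‖∫ ω, X i ω ∂μ‖ ^ 2 else 0 := by
    intro i hi j hj
    by_cases hji : j = i
    · subst hji
      simp
    · rw [if_neg hji, add_zero]
      exact (hindep hi hj (Ne.symm hji)).integral_bilin ((hX i hi).integrable one_le_two)
        ((hX j hj).integrable one_le_two) (innerSL ℝ)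
  simp_rw [norm_sum_sq_eq_sum_sum_inner]
  rw [integral_finsetSum _ fun i hi => integrable_finsetSum _ fun j hj =>
    (hX i hi).integrable_inner (hX j hj)]
  rw [← Finset.sum_add_distrib]
  refine Finset.sum_congr rfl fun i hi => ?_
  rw [integral_finsetSum _ fun j hj => (hX i hi).integrable_inner (hX j hj),
    Finset.sum_congr rfl (hcross i hi), Finset.sum_add_distrib, Finset.sum_ite_eq' s i, if_pos hi]

theorem integral_norm_average_sq_le_of_pairwise_indepFun (hX : ∀ i ∈ s, MemLp (X i) 2 μ)
    (hindep : Set.Pairwise s fun i j => IndepFun (X i) (X j) μ) {a b : ℝ}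
    (ha : ∀ i ∈ s, ∫ ω, ‖X i ω‖ ^ 2 ∂μ ≤ a) (hb : ∀ i ∈ s, ‖∫ ω, X i ω ∂μ‖ ≤ b) :
    ∫ ω, ‖(s.card : ℝ)⁻¹ • ∑ i ∈ s, X i ω‖ ^ 2 ∂μ ≤ b ^ 2 + a / s.card := by
  rcases s.eq_empty_or_nonempty with rfl | hs
  · simp
    positivity
  have hmean : ‖∑ i ∈ s, ∫ ω, X i ω ∂μ‖ ≤ s.card * b :=
    (norm_sum_le _ _).trans <| (Finset.sum_le_sum hb).trans_eq (by simp)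
  have hvar : ∑ i ∈ s, (∫ ω, ‖X i ω‖ ^ 2 ∂μ - ‖∫ ω, X i ω ∂μ‖ ^ 2) ≤ s.card * a := by
    calc _ ≤ ∑ _i ∈ s, a := Finset.sum_le_sum fun i hi => by
          linarith [ha i hi, sq_nonneg ‖∫ ω, X i ω ∂μ‖]
      _ = s.card * a := by simp
  simp_rw [norm_smul, mul_pow]
  rw [integral_const_mul, integral_norm_sum_sq_of_pairwise_indepFun hX hindep]
  calc ‖(s.card : ℝ)⁻¹‖ ^ 2 * (‖∑ i ∈ s, ∫ ω, X i ω ∂μ‖ ^ 2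
        + ∑ i ∈ s, (∫ ω, ‖X i ω‖ ^ 2 ∂μ - ‖∫ ω, X i ω ∂μ‖ ^ 2))
      ≤ ‖(s.card : ℝ)⁻¹‖ ^ 2 * ((s.card * b) ^ 2 + s.card * a) := by
        gcongr
    _ = b ^ 2 + a / s.card := by
        rw [norm_inv, Real.norm_natCast]
        field_simp

end InnerProductSpace

section Hadamard

variable {N : ℕ}

@[simp]
lemma hadamard_apply (u v : EuclideanSpace ℝ (Fin N)) (j : Fin N) :
    hadamard u v j = u j * v j :=
  rfl

lemma continuous_hadamard :
    Continuous fun p : EuclideanSpace ℝ (Fin N) × EuclideanSpace ℝ (Fin N) => hadamard p.1 p.2 := by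
  unfold hadamard
  fun_prop

lemma EuclideanSpace.norm_le_norm_of_forall_abs_le {ι : Type*} [Fintype ι]
    {x y : EuclideanSpace ℝ ι} (h : ∀ j, |x j| ≤ |y j|) : ‖x‖ ≤ ‖y‖ := by
  rw [← sq_le_sq₀ (norm_nonneg _) (norm_nonneg _), EuclideanSpace.real_norm_sq_eq,
    EuclideanSpace.real_norm_sq_eq]
  exact Finset.sum_le_sum fun j _ => sq_le_sq.2 (h j)

lemma norm_hadamard_le {u : EuclideanSpace ℝ (Fin N)} (hu : ∀ j, |u j| ≤ 1)
    (v : EuclideanSpace ℝ (Fin N)) : ‖hadamard u v‖ ≤ ‖v‖ :=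
  EuclideanSpace.norm_le_norm_of_forall_abs_le fun j => by
    rw [hadamard_apply, abs_mul]
    exact mul_le_of_le_one_left (abs_nonneg _) (hu j)

variable {Ω : Type*} [MeasurableSpace Ω] {μ : Measure Ω} {U g : Ω → EuclideanSpace ℝ (Fin N)}

lemma MeasureTheory.MemLp.hadamard {p : ENNReal} (hg : MemLp g p μ)
    (hU : AEStronglyMeasurable U μ) (hU_le : ∀ ω j, |U ω j| ≤ 1) :
    MemLp (fun ω => hadamard (U ω) (g ω)) p μ :=
  hg.mono (continuous_hadamard.comp_aestronglyMeasurable (hU.prodMk hg.1))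
    (ae_of_all _ fun ω => norm_hadamard_le (hU_le ω) (g ω))

lemma norm_integral_hadamard_le [IsProbabilityMeasure μ] (hind : IndepFun U g μ)
    (hU : AEStronglyMeasurable U μ) (hU_le : ∀ ω j, |U ω j| ≤ 1) (hg : Integrable g μ) :
    ‖∫ ω, hadamard (U ω) (g ω) ∂μ‖ ≤ ‖∫ ω, g ω ∂μ‖ := by
  have hint : Integrable (fun ω => hadamard (U ω) (g ω)) μ :=
    memLp_one_iff_integrable.1 ((memLp_one_iff_integrable.2 hg).hadamard hU hU_le)
  refine EuclideanSpace.norm_le_norm_of_forall_abs_le fun j => ?_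
  have hproj : Measurable fun x : EuclideanSpace ℝ (Fin N) => x j :=
    (EuclideanSpace.proj j).continuous.measurable
  rw [eval_integral_piLp hint.eval_piLp, eval_integral_piLp hg.eval_piLp]
  simp_rw [hadamard_apply]
  rw [hind.integral_fun_comp_mul_comp hU.aemeasurable hg.1.aemeasurable
    hproj.aestronglyMeasurable hproj.aestronglyMeasurable, abs_mul]
  refine mul_le_of_le_one_left (abs_nonneg _) ?_
  simpa using norm_integral_le_of_norm_le_const (μ := μ) (f := fun ω => U ω j)
    (ae_of_all _ fun ω => (Real.norm_eq_abs _).trans_le (hU_le ω j))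

end Hadamard

theorem second_moment_masked_average_general
    {N : ℕ}
    {Ω : Type*} [MeasurableSpace Ω] (μ : Measure Ω) [IsProbabilityMeasure μ]
    (M : ℕ) (σ : ℝ)
    (G : EuclideanSpace ℝ (Fin N))
    (U g : Fin M → Ω → EuclideanSpace ℝ (Fin N))
    (hUmeas : ∀ m, Measurable (U m))
    (hU01 : ∀ m, ∀ ω, ∀ j : Fin N, U m ω j = 0 ∨ U m ω j = 1)
    (hindep : ∀ m, IndepFun (U m) (g m) μ)
    (hgint : ∀ m, Integrable (g m) μ)
    (hgmean : ∀ m, (∫ ω, g m ω ∂μ) = G)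
    (hgvarint : ∀ m, Integrable (fun ω => ‖g m ω - G‖ ^ 2) μ)
    (hgvar : ∀ m, (∫ ω, ‖g m ω - G‖ ^ 2 ∂μ) ≤ σ ^ 2)
    (Z : Fin M → Ω → EuclideanSpace ℝ (Fin N))
    (hZ : ∀ m, ∀ ω, Z m ω = hadamard (U m ω) (g m ω))
    (hZindep : iIndepFun Z μ)
    (Δ : Ω → EuclideanSpace ℝ (Fin N))
    (hΔ : ∀ ω, Δ ω = (M : ℝ)⁻¹ • ∑ m : Fin M, Z m ω) :
    (∫ ω, ‖Δ ω‖ ^ 2 ∂μ) ≤ (1 + 1 / (M : ℝ)) * ‖G‖ ^ 2 + σ ^ 2 / M := by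
  obtain rfl : Z = fun m ω => hadamard (U m ω) (g m ω) := funext₂ hZ
  obtain rfl : Δ = fun ω => (M : ℝ)⁻¹ • ∑ m, hadamard (U m ω) (g m ω) := funext hΔ
  have hU_le : ∀ m ω j, |U m ω j| ≤ 1 := fun m ω j => by
    rcases hU01 m ω j with h | h <;> simp [h]
  have hg_L2 : ∀ m, MemLp (g m) 2 μ := fun m => by
    simpa using ((memLp_two_iff_integrable_sq_norm ((hgint m).1.sub aestronglyMeasurable_const)).2
      (hgvarint m)).add (memLp_const G)
  have hZ_L2 : ∀ m, MemLp (fun ω => hadamard (U m ω) (g m ω)) 2 μ := fun m =>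
    (hg_L2 m).hadamard (hUmeas m).aestronglyMeasurable (hU_le m)
  have hZ_sq : ∀ m ∈ Finset.univ, ∫ ω, ‖hadamard (U m ω) (g m ω)‖ ^ 2 ∂μ ≤ σ ^ 2 + ‖G‖ ^ 2 :=
    fun m _ => calc
      _ ≤ ∫ ω, ‖g m ω‖ ^ 2 ∂μ :=
        integral_mono ((memLp_two_iff_integrable_sq_norm (hZ_L2 m).1).1 (hZ_L2 m))
          ((memLp_two_iff_integrable_sq_norm (hg_L2 m).1).1 (hg_L2 m))
          fun ω => pow_le_pow_left₀ (norm_nonneg _) (norm_hadamard_le (hU_le m ω) _) 2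
      _ = ∫ ω, ‖g m ω - G‖ ^ 2 ∂μ + ‖G‖ ^ 2 := by
        rw [← hgmean m, integral_norm_sub_integral_sq (hg_L2 m)]
        ring
      _ ≤ σ ^ 2 + ‖G‖ ^ 2 := by linarith [hgvar m]
  have hZ_mean : ∀ m ∈ Finset.univ, ‖∫ ω, hadamard (U m ω) (g m ω) ∂μ‖ ≤ ‖G‖ := fun m _ =>
    hgmean m ▸ norm_integral_hadamard_le (hindep m) (hUmeas m).aestronglyMeasurable (hU_le m)
      (hgint m)
  have hbound := integral_norm_average_sq_le_of_pairwise_indepFun (fun m _ => hZ_L2 m)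
    (fun k _ l _ hkl => hZindep.indepFun hkl) hZ_sq hZ_mean
  rw [Finset.card_univ, Fintype.card_fin] at hbound
  exact hbound.trans_eq (by ring)

/-- **Lemma D.4 (Second moment of the masked microbatch average).** -/
theorem second_moment_masked_average
    {N : ℕ} (hN : 1 ≤ N)
    {Ω : Type*} [MeasurableSpace Ω] (μ : Measure Ω) [IsProbabilityMeasure μ]
    (M : ℕ) (hM : 1 ≤ M) (σ : ℝ) (hσ : 0 ≤ σ)
    (G : EuclideanSpace ℝ (Fin N))
    (U g : Fin M → Ω → EuclideanSpace ℝ (Fin N))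
    (hUmeas : ∀ m, Measurable (U m)) (hgmeas : ∀ m, Measurable (g m))
    (hU01 : ∀ m, ∀ ω, ∀ j : Fin N, U m ω j = 0 ∨ U m ω j = 1)
    (hindep : ∀ m, IndepFun (U m) (g m) μ)
    (hgint : ∀ m, Integrable (g m) μ)
    (hgmean : ∀ m, (∫ ω, g m ω ∂μ) = G)
    (hgvarint : ∀ m, Integrable (fun ω => ‖g m ω - G‖ ^ 2) μ)
    (hgvar : ∀ m, (∫ ω, ‖g m ω - G‖ ^ 2 ∂μ) ≤ σ ^ 2)
    (Z : Fin M → Ω → EuclideanSpace ℝ (Fin N))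
    (hZ : ∀ m, ∀ ω, Z m ω = hadamard (U m ω) (g m ω))
    (hZindep : iIndepFun Z μ)
    (Δ : Ω → EuclideanSpace ℝ (Fin N))
    (hΔ : ∀ ω, Δ ω = (M : ℝ)⁻¹ • ∑ m : Fin M, Z m ω) :
    (∫ ω, ‖Δ ω‖ ^ 2 ∂μ) ≤ (1 + 1 / (M : ℝ)) * ‖G‖ ^ 2 + σ ^ 2 / M :=
  second_moment_masked_average_general μ M σ G U g hUmeas hU01 hindep hgint hgmean hgvarint hgvar Z
    hZ hZindep Δ hΔ
end

section
/- One-step masked descent inequality (conditional step in the proof of Theorem D.5). Let N ≥ 1 and let F : ℝ^N → ℝ be differentiable and L-smooth with L > 0. Let (Ω, 𝓕, μ) be a probability space, let θ ∈ ℝ^N be a fixed point, and let Δ : Ω → ℝ^N be a measurable random vector with E[‖Δ‖²] < ∞. Let M ≥ 1 (real), σ ≥ 0, p_min ∈ (0,1], P ∈ [p_min, 1], and η > 0. Assume: (i) E[⟨∇F(θ), Δ⟩] = P ‖∇F(θ)‖²; (ii) E[‖Δ‖²] ≤ (1 + 1/M) ‖∇F(θ)‖² + σ²/M; (iii) η ≤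 p_min / (L (1 + 1/M)); and (iv) the function ω ↦ F(θ − η Δ(ω)) is integrable. Then E[F(θ − η Δ)] ≤ F(θ) − (η/2) P ‖∇F(θ)‖² + (L η² / 2)(σ² / M). -/
open MeasureTheory
open scoped RealInnerProductSpace

/-- **One-step masked descent inequality** (conditional step in the proof of
Theorem D.5). -/
theorem one_step_masked_descent
    {N : ℕ} (hN : 1 ≤ N)
    (F : EuclideanSpace ℝ (Fin N) → ℝ) (hFdiff : Differentiable ℝ F)
    (L : ℝ) (hL : 0 < L)
    (hsmooth : ∀ x y : EuclideanSpace ℝ (Fin N),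
      F y ≤ F x + ⟪gradient F x, y - x⟫ + L / 2 * ‖y - x‖ ^ 2)
    {Ω : Type*} [MeasurableSpace Ω] (μ : Measure Ω) [IsProbabilityMeasure μ]
    (θ : EuclideanSpace ℝ (Fin N))
    (Δ : Ω → EuclideanSpace ℝ (Fin N)) (hΔmeas : Measurable Δ)
    (hΔ2int : Integrable (fun ω => ‖Δ ω‖ ^ 2) μ)
    (M σ pmin P η : ℝ)
    (hM : 1 ≤ M) (hσ : 0 ≤ σ) (hpmin0 : 0 < pmin) (hpmin1 : pmin ≤ 1)
    (hP : pmin ≤ P ∧ P ≤ 1) (hη0 : 0 < η)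
    (hmean : (∫ ω, ⟪gradient F θ, Δ ω⟫ ∂μ) = P * ‖gradient F θ‖ ^ 2)
    (hsecond : (∫ ω, ‖Δ ω‖ ^ 2 ∂μ) ≤ (1 + 1 / M) * ‖gradient F θ‖ ^ 2 + σ ^ 2 / M)
    (hη : η ≤ pmin / (L * (1 + 1 / M)))
    (hFint : Integrable (fun ω => F (θ - η • Δ ω)) μ) :
    (∫ ω, F (θ - η • Δ ω) ∂μ) ≤
      F θ - η / 2 * P * ‖gradient F θ‖ ^ 2 + L * η ^ 2 / 2 * (σ ^ 2 / M) := by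

  set g := gradient F θ with hg
  -- pointwise smoothness bound
  have h1 : ∀ ω, F (θ - η • Δ ω) ≤ F θ - η * ⟪g, Δ ω⟫ + L / 2 * η ^ 2 * ‖Δ ω‖ ^ 2 := by
    intro ω
    have := hsmooth θ (θ - η • Δ ω)
    have hy : θ - η • Δ ω - θ = -(η • Δ ω) := by abel
    rw [hy] at this
    have hi : ⟪g, -(η • Δ ω)⟫ = -(η * ⟪g, Δ ω⟫) := by
      rw [inner_neg_right, real_inner_smul_right]
    have hn : ‖-(η • Δ ω)‖ ^ 2 = η ^ 2 * ‖Δ ω‖ ^ 2 := by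
      rw [norm_neg, norm_smul]
      simp [mul_pow, abs_of_pos hη0]
    rw [hi, hn] at this
    linarith [this]
  -- integrability facts
  have hΔ1int : Integrable (fun ω => ‖Δ ω‖) μ := by
    refine Integrable.mono' (hΔ2int.add (integrable_const 1)) ?_ ?_
    · exact (hΔmeas.norm.aestronglyMeasurable)
    · refine Filter.Eventually.of_forall fun ω => ?_
      have h := abs_of_nonneg (norm_nonneg (Δ ω))
      simp only [Pi.add_apply]
      rw [Real.norm_eq_abs, h]
      nlinarith [norm_nonneg (Δ ω), sq_nonneg (‖Δ ω‖ - 1)]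
  have hinner_int : Integrable (fun ω => ⟪g, Δ ω⟫) μ := by
    refine Integrable.mono' (hΔ1int.const_mul ‖g‖) ?_ ?_
    · exact (measurable_const.inner hΔmeas).aestronglyMeasurable
    · refine Filter.Eventually.of_forall fun ω => ?_
      rw [Real.norm_eq_abs]
      exact abs_real_inner_le_norm g (Δ ω)
  have hRHSint : Integrable (fun ω => F θ - η * ⟪g, Δ ω⟫ + L / 2 * η ^ 2 * ‖Δ ω‖ ^ 2) μ := by
    exact ((integrable_const (F θ)).sub (hinner_int.const_mul η)).add
      (hΔ2int.const_mul (L / 2 * η ^ 2))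
  have h2 : (∫ ω, F (θ - η • Δ ω) ∂μ) ≤
      ∫ ω, (F θ - η * ⟪g, Δ ω⟫ + L / 2 * η ^ 2 * ‖Δ ω‖ ^ 2) ∂μ :=
    integral_mono hFint hRHSint h1
  have h3 : (∫ ω, (F θ - η * ⟪g, Δ ω⟫ + L / 2 * η ^ 2 * ‖Δ ω‖ ^ 2) ∂μ)
      = F θ - η * (P * ‖g‖ ^ 2) + L / 2 * η ^ 2 * (∫ ω, ‖Δ ω‖ ^ 2 ∂μ) := by
    have hsubint : Integrable (fun ω => F θ - η * ⟪g, Δ ω⟫) μ :=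
      (integrable_const (F θ)).sub (hinner_int.const_mul η)
    rw [integral_add hsubint (hΔ2int.const_mul (L / 2 * η ^ 2)),
      integral_sub (integrable_const (F θ)) (hinner_int.const_mul η),
      integral_const, integral_const_mul, integral_const_mul, hmean]
    simp
  -- key inequality: L * η * (1 + 1/M) ≤ P
  have hM0 : (0 : ℝ) < M := lt_of_lt_of_le one_pos hM
  have hMpos : (0 : ℝ) < 1 + 1 / M := by positivity
  have hkey : L * η * (1 + 1 / M) ≤ P := by
    have h := (le_div_iff₀ (by positivity : (0:ℝ) < L * (1 + 1 / M))).mp hη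
    calc L * η * (1 + 1 / M) = η * (L * (1 + 1 / M)) := by ring
    _ ≤ pmin := h
    _ ≤ P := hP.1
  have hE2 : (∫ ω, ‖Δ ω‖ ^ 2 ∂μ) ≤ (1 + 1 / M) * ‖g‖ ^ 2 + σ ^ 2 / M := hsecond
  have hg2 : (0:ℝ) ≤ ‖g‖ ^ 2 := sq_nonneg _
  calc (∫ ω, F (θ - η • Δ ω) ∂μ)
      ≤ F θ - η * (P * ‖g‖ ^ 2) + L / 2 * η ^ 2 * (∫ ω, ‖Δ ω‖ ^ 2 ∂μ) := by rw [← h3]; exact h2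
    _ ≤ F θ - η * (P * ‖g‖ ^ 2) + L / 2 * η ^ 2 * ((1 + 1 / M) * ‖g‖ ^ 2 + σ ^ 2 / M) := by
        have : (0:ℝ) ≤ L / 2 * η ^ 2 := by positivity
        nlinarith [this]
    _ ≤ F θ - η / 2 * P * ‖g‖ ^ 2 + L * η ^ 2 / 2 * (σ ^ 2 / M) := by
        nlinarith [mul_le_mul_of_nonneg_right hkey hg2, sq_nonneg η, hη0.le]
end

section
/- Theorem D.5 (Iteration-complexity bound for SGD with TimelyFreeze masking). Let N ≥ 1 and let F : ℝ^N → ℝ be differentiable, L-smooth with L > 0, and bounded below by F⋆ (i.e. F(x) ≥ F⋆ for all x). Let (Ω, 𝓕, μ) be a probability space, let T ≥ 1 be a natural number, let M ≥ 1 (real), σ ≥ 0, p_min ∈ (0,1], and let η > 0 satisfy η ≤ p_min / (L (1 + 1/M)). Let θ_1, …, θ_{T+1} : Ω → ℝ^N and Δ_1, …, Δ_T : Ω → ℝ^N be measurable random vectors with θ_1 equal μ-a.e. to a constant x₁ ∈ ℝ^N, and θ_{t+1} = θ_t − η Δ_t μ-a.e. for each t ∈ {1,…,T}. For each t let P_t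 : Ω → ℝ be measurable with respect to σ(θ_t) and satisfy p_min ≤ P_t ≤ 1 μ-a.e. Assume, for each t ∈ {1,…,T}: (i) μ-a.e., E[⟨∇F(θ_t), Δ_t⟩ | σ(θ_t)] = P_t ‖∇F(θ_t)‖²; (ii) μ-a.e., E[‖Δ_t‖² | σ(θ_t)] ≤ (1 + 1/M) ‖∇F(θ_t)‖² + σ²/M; and (iii) the random variables F(θ_t), ‖∇F(θ_t)‖², ⟨∇F(θ_t), Δ_t⟩, and ‖Δ_t‖² are integrable. Suppose Σ_{t=1}^T E[‖∇F(θ_t)‖²] > 0 and define the average effective update probability p̄_eff := (Σ_{t=1}^T E[P_t ‖∇F(θ_t)‖²]) / (Σ_{t=1}^T E[‖∇F(θ_t)‖²]). Then (1/T) Σ_{t=1}^T E[‖∇F(θ_t)‖²] ≤ 2 (F(x₁) − F⋆) / (p̄_eff η T) + L η σ² / (p̄_eff M). -/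
open MeasureTheory
open scoped RealInnerProductSpace

private lemma tele_aux (f : ℕ → ℝ) (n : ℕ) :
    ∑ t ∈ Finset.Icc 1 n, (f t - f (t + 1)) = f 1 - f (n + 1) := by
  induction n with
  | zero => simp
  | succ n ih =>
    rw [Finset.sum_Icc_succ_top (by omega), ih]; ring

private lemma abs_aux {a b c : ℝ} (h1 : c ≤ a) (h2 : a ≤ b) : |a| ≤ |c| + |b| := by
  rw [abs_le]
  constructor
  · have := neg_abs_le c; have := abs_nonneg b; linarith
  · have := le_abs_self b; have := abs_nonneg c; linarith

set_option maxHeartbeats 1000000 in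
/-- **Theorem D.5 (Iteration-complexity bound for SGD with TimelyFreeze
masking).** -/
theorem iteration_complexity_timelyfreeze
    {N : ℕ} (hN : 1 ≤ N)
    (F : EuclideanSpace ℝ (Fin N) → ℝ) (hFdiff : Differentiable ℝ F)
    (L : ℝ) (hL : 0 < L)
    (hsmooth : ∀ x y : EuclideanSpace ℝ (Fin N),
      F y ≤ F x + ⟪gradient F x, y - x⟫ + L / 2 * ‖y - x‖ ^ 2)
    (Fstar : ℝ) (hFstar : ∀ x, Fstar ≤ F x)
    {Ω : Type*} [MeasurableSpace Ω] (μ : Measure Ω) [IsProbabilityMeasure μ]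
    (T : ℕ) (hT : 1 ≤ T)
    (M σ pmin η : ℝ)
    (hM : 1 ≤ M) (hσ : 0 ≤ σ) (hpmin0 : 0 < pmin) (hpmin1 : pmin ≤ 1)
    (hη0 : 0 < η) (hη : η ≤ pmin / (L * (1 + 1 / M)))
    (θ Δ : ℕ → Ω → EuclideanSpace ℝ (Fin N))
    (hθmeas : ∀ t ∈ Finset.Icc 1 (T + 1), Measurable (θ t))
    (hΔmeas : ∀ t ∈ Finset.Icc 1 T, Measurable (Δ t))
    (x₁ : EuclideanSpace ℝ (Fin N)) (hθ1 : ∀ᵐ ω ∂μ, θ 1 ω = x₁)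
    (hstep : ∀ t ∈ Finset.Icc 1 T, ∀ᵐ ω ∂μ, θ (t + 1) ω = θ t ω - η • Δ t ω)
    (P : ℕ → Ω → ℝ)
    (hPmeas : ∀ t ∈ Finset.Icc 1 T,
      Measurable[MeasurableSpace.comap (θ t) inferInstance] (P t))
    (hPbd : ∀ t ∈ Finset.Icc 1 T, ∀ᵐ ω ∂μ, pmin ≤ P t ω ∧ P t ω ≤ 1)
    (hcond1 : ∀ t ∈ Finset.Icc 1 T,
      μ[fun ω => ⟪gradient F (θ t ω), Δ t ω⟫ |
          MeasurableSpace.comap (θ t) inferInstance]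
        =ᵐ[μ] fun ω => P t ω * ‖gradient F (θ t ω)‖ ^ 2)
    (hcond2 : ∀ t ∈ Finset.Icc 1 T, ∀ᵐ ω ∂μ,
      (μ[fun ω' => ‖Δ t ω'‖ ^ 2 | MeasurableSpace.comap (θ t) inferInstance]) ω ≤
        (1 + 1 / M) * ‖gradient F (θ t ω)‖ ^ 2 + σ ^ 2 / M)
    (hint : ∀ t ∈ Finset.Icc 1 T,
      Integrable (fun ω => F (θ t ω)) μ ∧
      Integrable (fun ω => ‖gradient F (θ t ω)‖ ^ 2) μ ∧
      Integrable (fun ω => ⟪gradient F (θ t ω), Δ t ω⟫) μ ∧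
      Integrable (fun ω => ‖Δ t ω‖ ^ 2) μ)
    (hpos : 0 < ∑ t ∈ Finset.Icc 1 T, ∫ ω, ‖gradient F (θ t ω)‖ ^ 2 ∂μ)
    (peff : ℝ)
    (hpeff : peff =
      (∑ t ∈ Finset.Icc 1 T, ∫ ω, P t ω * ‖gradient F (θ t ω)‖ ^ 2 ∂μ) /
        (∑ t ∈ Finset.Icc 1 T, ∫ ω, ‖gradient F (θ t ω)‖ ^ 2 ∂μ)) :
    (1 / (T : ℝ)) * ∑ t ∈ Finset.Icc 1 T, ∫ ω, ‖gradient F (θ t ω)‖ ^ 2 ∂μ ≤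
      2 * (F x₁ - Fstar) / (peff * η * T) + L * η * σ ^ 2 / (peff * M) := by
  classical
  have hM0 : (0 : ℝ) < M := lt_of_lt_of_le one_pos hM
  have hT0 : (0 : ℝ) < (T : ℝ) := by exact_mod_cast hT
  have hmem' : ∀ t ∈ Finset.Icc 1 T, t ∈ Finset.Icc 1 (T + 1) := by
    intro t ht; simp only [Finset.mem_Icc] at *; omega
  have hTT : T ∈ Finset.Icc 1 T := by simp [Finset.mem_Icc, hT]
  -- pointwise descent inequality
  have hdesc : ∀ t ∈ Finset.Icc 1 T, ∀ᵐ ω ∂μ,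
      F (θ (t + 1) ω) ≤ F (θ t ω) - η * ⟪gradient F (θ t ω), Δ t ω⟫
        + L * η ^ 2 / 2 * ‖Δ t ω‖ ^ 2 := by
    intro t ht
    filter_upwards [hstep t ht] with ω hω
    rw [hω]
    have h := hsmooth (θ t ω) (θ t ω - η • Δ t ω)
    have h1 : θ t ω - η • Δ t ω - θ t ω = -(η • Δ t ω) := by abel
    rw [h1, inner_neg_right, real_inner_smul_right, norm_neg, norm_smul,
      Real.norm_eq_abs, abs_of_pos hη0, mul_pow] at h
    nlinarith [sq_nonneg ‖Δ t ω‖]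
  -- integrability of F(θ (T+1))
  obtain ⟨hFT, hgT, hiT, hdT⟩ := hint T hTT
  have hintG : Integrable (fun ω => F (θ T ω) - η * ⟪gradient F (θ T ω), Δ T ω⟫
      + L * η ^ 2 / 2 * ‖Δ T ω‖ ^ 2) μ :=
    (hFT.sub (hiT.const_mul η)).add (hdT.const_mul _)
  have hFT1 : Integrable (fun ω => F (θ (T + 1) ω)) μ := by
    refine Integrable.mono' ((integrable_const |Fstar|).add hintG.abs)
      ((hFdiff.continuous.measurable.comp
        (hθmeas (T + 1) (by simp [Finset.mem_Icc]))).aestronglyMeasurable) ?_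
    filter_upwards [hdesc T hTT] with ω h
    rw [Real.norm_eq_abs]
    exact abs_aux (hFstar _) h
  -- per-step integrated inequality
  have hstep2 : ∀ t ∈ Finset.Icc 1 T,
      (∫ ω, F (θ (t + 1) ω) ∂μ) ≤ (∫ ω, F (θ t ω) ∂μ)
        - η * (∫ ω, ⟪gradient F (θ t ω), Δ t ω⟫ ∂μ)
        + L * η ^ 2 / 2 * (∫ ω, ‖Δ t ω‖ ^ 2 ∂μ) := by
    intro t ht
    obtain ⟨hF, hg, hi, hd⟩ := hint t ht
    have hintF1 : Integrable (fun ω => F (θ (t + 1) ω)) μ := by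
      rcases eq_or_lt_of_le (Finset.mem_Icc.1 ht).2 with h | h
      · rw [h]; exact hFT1
      · exact (hint (t + 1) (by simp only [Finset.mem_Icc] at *; omega)).1
    calc ∫ ω, F (θ (t + 1) ω) ∂μ
        ≤ ∫ ω, (F (θ t ω) - η * ⟪gradient F (θ t ω), Δ t ω⟫
            + L * η ^ 2 / 2 * ‖Δ t ω‖ ^ 2) ∂μ :=
          integral_mono_ae hintF1 ((hF.sub (hi.const_mul η)).add (hd.const_mul _))
            (hdesc t ht)
      _ = _ := by
          have e1 : Integrable (fun ω => F (θ t ω) - η * ⟪gradient F (θ t ω), Δ t ω⟫) μ :=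
            hF.sub (hi.const_mul η)
          have e2 : Integrable (fun ω => L * η ^ 2 / 2 * ‖Δ t ω‖ ^ 2) μ := hd.const_mul _
          rw [integral_add e1 e2, integral_sub hF (hi.const_mul η),
            integral_const_mul, integral_const_mul]
  -- tower property
  have hA : ∀ t ∈ Finset.Icc 1 T,
      ∫ ω, ⟪gradient F (θ t ω), Δ t ω⟫ ∂μ
        = ∫ ω, P t ω * ‖gradient F (θ t ω)‖ ^ 2 ∂μ := by
    intro t ht
    rw [← integral_condExp (measurable_iff_comap_le.1 (hθmeas t (hmem' t ht)))]
    exact integral_congr_ae (hcond1 t ht)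
  have hPgint : ∀ t ∈ Finset.Icc 1 T,
      Integrable (fun ω => P t ω * ‖gradient F (θ t ω)‖ ^ 2) μ :=
    fun t ht => integrable_condExp.congr (hcond1 t ht)
  -- variance bound
  have hD : ∀ t ∈ Finset.Icc 1 T,
      ∫ ω, ‖Δ t ω‖ ^ 2 ∂μ
        ≤ (1 + 1 / M) * (∫ ω, ‖gradient F (θ t ω)‖ ^ 2 ∂μ) + σ ^ 2 / M := by
    intro t ht
    obtain ⟨hF, hg, hi, hd⟩ := hint t ht
    calc ∫ ω, ‖Δ t ω‖ ^ 2 ∂μ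
        = ∫ ω, (μ[fun ω' => ‖Δ t ω'‖ ^ 2 |
            MeasurableSpace.comap (θ t) inferInstance]) ω ∂μ :=
          (integral_condExp (measurable_iff_comap_le.1 (hθmeas t (hmem' t ht)))).symm
      _ ≤ ∫ ω, ((1 + 1 / M) * ‖gradient F (θ t ω)‖ ^ 2 + σ ^ 2 / M) ∂μ :=
          integral_mono_ae integrable_condExp ((hg.const_mul _).add (integrable_const _))
            (hcond2 t ht)
      _ = (1 + 1 / M) * (∫ ω, ‖gradient F (θ t ω)‖ ^ 2 ∂μ) + σ ^ 2 / M := by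
          have e1 : Integrable (fun ω => (1 + 1 / M) * ‖gradient F (θ t ω)‖ ^ 2) μ :=
            hg.const_mul _
          rw [integral_add e1 (integrable_const _), integral_const_mul, integral_const]
          simp
  -- lower bound via pmin
  have hlow : ∀ t ∈ Finset.Icc 1 T,
      pmin * (∫ ω, ‖gradient F (θ t ω)‖ ^ 2 ∂μ)
        ≤ ∫ ω, P t ω * ‖gradient F (θ t ω)‖ ^ 2 ∂μ := by
    intro t ht
    obtain ⟨hF, hg, hi, hd⟩ := hint t ht
    rw [← integral_const_mul]
    refine integral_mono_ae (hg.const_mul pmin) (hPgint t ht) ?_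
    filter_upwards [hPbd t ht] with ω hb
    exact mul_le_mul_of_nonneg_right hb.1 (sq_nonneg _)
  -- endpoints
  have hb1 : ∫ ω, F (θ 1 ω) ∂μ = F x₁ := by
    rw [integral_congr_ae (g := fun _ => F x₁) (hθ1.mono fun ω h => by rw [h])]
    simp
  have hbT1 : Fstar ≤ ∫ ω, F (θ (T + 1) ω) ∂μ := by
    have h := integral_mono_ae (integrable_const Fstar) hFT1
      (Filter.Eventually.of_forall fun ω => hFstar _)
    simpa using h
  -- summed inequality
  have hsum : ∑ t ∈ Finset.Icc 1 T,
      (η * (∫ ω, P t ω * ‖gradient F (θ t ω)‖ ^ 2 ∂μ)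
        - L * η ^ 2 / 2 * (1 + 1 / M) * (∫ ω, ‖gradient F (θ t ω)‖ ^ 2 ∂μ)
        - L * η ^ 2 / 2 * (σ ^ 2 / M)) ≤ F x₁ - Fstar := by
    calc ∑ t ∈ Finset.Icc 1 T,
        (η * (∫ ω, P t ω * ‖gradient F (θ t ω)‖ ^ 2 ∂μ)
          - L * η ^ 2 / 2 * (1 + 1 / M) * (∫ ω, ‖gradient F (θ t ω)‖ ^ 2 ∂μ)
          - L * η ^ 2 / 2 * (σ ^ 2 / M))
        ≤ ∑ t ∈ Finset.Icc 1 T, ((∫ ω, F (θ t ω) ∂μ) - (∫ ω, F (θ (t + 1) ω) ∂μ)) := by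
          refine Finset.sum_le_sum fun t ht => ?_
          have h2 := hstep2 t ht
          have h3 := hA t ht
          have h4 := hD t ht
          rw [h3] at h2
          have hc : (0 : ℝ) ≤ L * η ^ 2 / 2 := by positivity
          have h6 := mul_le_mul_of_nonneg_left h4 hc
          nlinarith [h2, h6]
      _ = (∫ ω, F (θ 1 ω) ∂μ) - (∫ ω, F (θ (T + 1) ω) ∂μ) :=
          tele_aux (fun t => ∫ ω, F (θ t ω) ∂μ) T
      _ ≤ F x₁ - Fstar := by rw [hb1]; linarith
  -- expand the sum
  set S := ∑ t ∈ Finset.Icc 1 T, ∫ ω, ‖gradient F (θ t ω)‖ ^ 2 ∂μ with hS_def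
  set A := ∑ t ∈ Finset.Icc 1 T, ∫ ω, P t ω * ‖gradient F (θ t ω)‖ ^ 2 ∂μ with hA_def
  have hexp : η * A - L * η ^ 2 / 2 * (1 + 1 / M) * S
      - (T : ℝ) * (L * η ^ 2 / 2 * (σ ^ 2 / M)) ≤ F x₁ - Fstar := by
    have := hsum
    rw [Finset.sum_sub_distrib, Finset.sum_sub_distrib, ← Finset.mul_sum,
      ← Finset.mul_sum, Finset.sum_const, Nat.card_Icc, nsmul_eq_mul] at this
    simpa [hS_def, hA_def, Nat.add_sub_cancel] using this
  -- algebraic facts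
  have hApm : pmin * S ≤ A := by
    rw [hS_def, hA_def, Finset.mul_sum]
    exact Finset.sum_le_sum hlow
  have hpeffS : A = peff * S := by
    rw [hpeff]
    field_simp
  have hpeff_ge : pmin ≤ peff := by
    rw [hpeff]
    exact (le_div_iff₀ hpos).2 hApm
  have hpeff_pos : 0 < peff := lt_of_lt_of_le hpmin0 hpeff_ge
  have hSnn : 0 ≤ S := le_of_lt hpos
  have hLη : L * η * (1 + 1 / M) ≤ pmin := by
    have hden : 0 < L * (1 + 1 / M) := by positivity
    calc L * η * (1 + 1 / M) = η * (L * (1 + 1 / M)) := by ring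
      _ ≤ (pmin / (L * (1 + 1 / M))) * (L * (1 + 1 / M)) :=
          mul_le_mul_of_nonneg_right hη hden.le
      _ = pmin := div_mul_cancel₀ _ (ne_of_gt hden)
  have h5 : L * η ^ 2 / 2 * (1 + 1 / M) * S ≤ η / 2 * A := by
    have h51 : L * η ^ 2 / 2 * (1 + 1 / M) * S ≤ η / 2 * (pmin * S) := by
      nlinarith [mul_nonneg (mul_nonneg hη0.le hSnn) (sub_nonneg.2 hLη)]
    have h52 : η / 2 * (pmin * S) ≤ η / 2 * A :=
      mul_le_mul_of_nonneg_left hApm (by positivity)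
    linarith
  have hkey : η * (peff * S) ≤ 2 * (F x₁ - Fstar) + L * η ^ 2 * (T : ℝ) * σ ^ 2 / M := by
    rw [← hpeffS]
    ring_nf at hexp h5 ⊢
    linarith
  -- final arithmetic
  have hrhs : 2 * (F x₁ - Fstar) / (peff * η * T) + L * η * σ ^ 2 / (peff * M)
      = (2 * (F x₁ - Fstar) * M + L * η ^ 2 * σ ^ 2 * T) / (peff * η * T * M) := by
    field_simp
  rw [hrhs, le_div_iff₀ (by positivity)]
  have hid : 1 / (T : ℝ) * S * (peff * η * (T : ℝ) * M) = η * (peff * S) * M := by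
    field_simp
  have h7 := mul_le_mul_of_nonneg_right hkey hM0.le
  have hid2 : (2 * (F x₁ - Fstar) + L * η ^ 2 * (T : ℝ) * σ ^ 2 / M) * M
      = 2 * (F x₁ - Fstar) * M + L * η ^ 2 * σ ^ 2 * (T : ℝ) := by
    field_simp
  rw [hid, ← hid2]
  exact h7
end

section
/- Baseline SGD convergence bound (equation for the no-freezing baseline). Let N ≥ 1 and let F : ℝ^N → ℝ be differentiable, L-smooth with L > 0, and bounded below by F⋆. Let (Ω, 𝓕, μ) be a probability space, let T ≥ 1 be a natural number, let M ≥ 1 (real), σ ≥ 0, and let η > 0 satisfy η ≤ 1 / (L (1 + 1/M)). Let θ_1, …, θ_{T+1} : Ω → ℝ^N and Δ_1, …, Δ_T : Ω → ℝ^N be measurable random vectors with θ_1 equal μ-a.e. to a constant x₁ ∈ ℝ^N, and θ_{t+1} = θ_t − η Δ_t μ-a.e. for each t ∈ {1,…,T}. Assume, for each t ∈ {1,…,T}: (i) μ-a.e., E[⟨∇F(θ_t), Δ_t⟩ | σ(θ_t)] = ‖∇F(θ_t)‖²; (ii) μ-a.e., E[‖Δ_t‖² | σ(θ_t)] ≤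 (1 + 1/M) ‖∇F(θ_t)‖² + σ²/M; and (iii) the random variables F(θ_t), ‖∇F(θ_t)‖², ⟨∇F(θ_t), Δ_t⟩, and ‖Δ_t‖² are integrable. Then (1/T) Σ_{t=1}^T E[‖∇F(θ_t)‖²] ≤ 2 (F(x₁) − F⋆) / (η T) + L η σ² / M. -/
open MeasureTheory
open scoped RealInnerProductSpace

/-!
Smoothness bounds `F (θ - η Δ)` by `F θ - η ⟪∇F θ, Δ⟫ + (L/2) η² ‖Δ‖²`. In expectation,
unbiasedness turns the linear term into `-η E‖∇F θ‖²`, and the second-moment bound together with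
`η L (1 + 1/M) ≤ 1` lets the quadratic term eat at most half of it. So each step lowers `E F θ` by
`(η/2) (E‖∇F θ‖² - L η σ²/M)`, and summing over `t` telescopes between `F x₁` and `F⋆`.
-/

theorem average_le_of_descent {A G : ℕ → ℝ} {T : ℕ} {η b Amin : ℝ} (hT : 1 ≤ T) (hη : 0 < η)
    (hdesc : ∀ t ∈ Finset.Icc 1 T, A (t + 1) ≤ A t - η / 2 * (G t - b))
    (hmin : Amin ≤ A (T + 1)) :
    1 / (T : ℝ) * ∑ t ∈ Finset.Icc 1 T, G t ≤ 2 * (A 1 - Amin) / (η * T) + b := by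
  have hsum : η / 2 * ∑ t ∈ Finset.Icc 1 T, (G t - b) ≤ A 1 - A (T + 1) := by
    rw [Finset.mul_sum, ← neg_sub, ← Finset.sum_Icc_sub (by omega), ← Finset.sum_neg_distrib]
    exact Finset.sum_le_sum fun t ht => by linarith [hdesc t ht]
  rw [Finset.sum_sub_distrib, Finset.sum_const, Nat.card_Icc, Nat.add_sub_cancel,
    nsmul_eq_mul] at hsum
  have hT0 : (0 : ℝ) < T := by exact_mod_cast hT
  rw [div_add' _ _ _ (by positivity), one_div_mul_eq_div, div_le_div_iff₀ hT0 (by positivity)]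
  nlinarith

section SmoothDescent

variable {E : Type*} [NormedAddCommGroup E] [InnerProductSpace ℝ E] {F : E → ℝ} {g : E → E}
  {L : ℝ}

theorem apply_sub_smul_le_of_smooth
    (hsmooth : ∀ x y, F y ≤ F x + ⟪g x, y - x⟫ + L / 2 * ‖y - x‖ ^ 2) (x d : E) (η : ℝ) :
    F (x - η • d) ≤ F x - η * ⟪g x, d⟫ + L / 2 * η ^ 2 * ‖d‖ ^ 2 := by
  have h := hsmooth x (x - η • d)
  rwa [sub_sub_cancel_left, inner_neg_right, real_inner_smul_right, norm_neg, norm_smul, mul_pow,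
    Real.norm_eq_abs, sq_abs, ← sub_eq_add_neg, ← mul_assoc] at h

variable {Ω : Type*} {mΩ : MeasurableSpace Ω} {μ : Measure Ω}
  {X Y D : Ω → E} {η Fmin : ℝ}

theorem integrable_and_integral_le_of_smooth_step [IsFiniteMeasure μ]
    (hsmooth : ∀ x y, F y ≤ F x + ⟪g x, y - x⟫ + L / 2 * ‖y - x‖ ^ 2) (hFmin : ∀ x, Fmin ≤ F x)
    (hY : ∀ᵐ ω ∂μ, Y ω = X ω - η • D ω) (hFY : AEStronglyMeasurable (fun ω => F (Y ω)) μ)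
    (hFX : Integrable (fun ω => F (X ω)) μ) (hXD : Integrable (fun ω => ⟪g (X ω), D ω⟫) μ)
    (hD : Integrable (fun ω => ‖D ω‖ ^ 2) μ) :
    Integrable (fun ω => F (Y ω)) μ ∧
      ∫ ω, F (Y ω) ∂μ ≤
        ∫ ω, F (X ω) ∂μ - η * ∫ ω, ⟪g (X ω), D ω⟫ ∂μ + L / 2 * η ^ 2 * ∫ ω, ‖D ω‖ ^ 2 ∂μ := by
  have hbound : ∀ᵐ ω ∂μ,
      F (Y ω) ≤ F (X ω) - η * ⟪g (X ω), D ω⟫ + L / 2 * η ^ 2 * ‖D ω‖ ^ 2 := by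
    filter_upwards [hY] with ω hω
    rw [hω]
    exact apply_sub_smul_le_of_smooth hsmooth _ _ _
  have hsub : Integrable (fun ω => F (X ω) - η * ⟪g (X ω), D ω⟫) μ := hFX.sub (hXD.const_mul η)
  have hbound_int : Integrable
      (fun ω => F (X ω) - η * ⟪g (X ω), D ω⟫ + L / 2 * η ^ 2 * ‖D ω‖ ^ 2) μ :=
    hsub.add (hD.const_mul _)
  have hFY_int : Integrable (fun ω => F (Y ω)) μ :=
    integrable_of_le_of_le hFY (.of_forall fun ω => hFmin (Y ω)) hbound (integrable_const Fmin)
      hbound_int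
  refine ⟨hFY_int, (integral_mono_ae hFY_int hbound_int hbound).trans_eq ?_⟩
  rw [integral_add hsub (hD.const_mul _), integral_sub hFX (hXD.const_mul η), integral_const_mul,
    integral_const_mul]

theorem integral_eq_of_condExp_ae_eq [IsFiniteMeasure μ] {m : MeasurableSpace Ω} (hm : m ≤ mΩ)
    {f h : Ω → ℝ} (hf : μ[f | m] =ᵐ[μ] h) : ∫ ω, f ω ∂μ = ∫ ω, h ω ∂μ :=
  (integral_condExp hm).symm.trans (integral_congr_ae hf)

theorem integral_le_of_condExp_ae_le [IsFiniteMeasure μ] {m : MeasurableSpace Ω} (hm : m ≤ mΩ)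
    {f h : Ω → ℝ} (hf : μ[f | m] ≤ᵐ[μ] h) (hh : Integrable h μ) : ∫ ω, f ω ∂μ ≤ ∫ ω, h ω ∂μ :=
  (integral_condExp hm).symm.trans_le (integral_mono_ae integrable_condExp hh hf)

theorem integral_le_of_sgd_step [IsProbabilityMeasure μ] {a s : ℝ}
    (hsmooth : ∀ x y, F y ≤ F x + ⟪g x, y - x⟫ + L / 2 * ‖y - x‖ ^ 2) (hFmin : ∀ x, Fmin ≤ F x)
    (hL : 0 ≤ L) (hη0 : 0 ≤ η) (hη : η * L * a ≤ 1)
    (hY : ∀ᵐ ω ∂μ, Y ω = X ω - η • D ω) (hFY : AEStronglyMeasurable (fun ω => F (Y ω)) μ)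
    -- `m` is bound after `hFY`, so that `hFY` speaks of measurability for `mΩ`, not `m`.
    {m : MeasurableSpace Ω} (hm : m ≤ mΩ)
    (hunbiased : μ[fun ω => ⟪g (X ω), D ω⟫ | m] =ᵐ[μ] fun ω => ‖g (X ω)‖ ^ 2)
    (hmoment : ∀ᵐ ω ∂μ, (μ[fun ω' => ‖D ω'‖ ^ 2 | m]) ω ≤ a * ‖g (X ω)‖ ^ 2 + s)
    (hFX : Integrable (fun ω => F (X ω)) μ) (hgX : Integrable (fun ω => ‖g (X ω)‖ ^ 2) μ)
    (hXD : Integrable (fun ω => ⟪g (X ω), D ω⟫) μ) (hD : Integrable (fun ω => ‖D ω‖ ^ 2) μ) :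
    Integrable (fun ω => F (Y ω)) μ ∧
      ∫ ω, F (Y ω) ∂μ ≤
        ∫ ω, F (X ω) ∂μ - η / 2 * (∫ ω, ‖g (X ω)‖ ^ 2 ∂μ - L * η * s) := by
  obtain ⟨hFY_int, hstep⟩ :=
    integrable_and_integral_le_of_smooth_step hsmooth hFmin hY hFY hFX hXD hD
  refine ⟨hFY_int, ?_⟩
  have hinner := integral_eq_of_condExp_ae_eq hm hunbiased
  have hsecond : ∫ ω, ‖D ω‖ ^ 2 ∂μ ≤ a * ∫ ω, ‖g (X ω)‖ ^ 2 ∂μ + s := by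
    have := integral_le_of_condExp_ae_le hm hmoment ((hgX.const_mul a).add (integrable_const s))
    rwa [integral_add (hgX.const_mul a) (integrable_const s), integral_const_mul,
      integral_const, probReal_univ, one_smul] at this
  have hG : 0 ≤ ∫ ω, ‖g (X ω)‖ ^ 2 ∂μ := integral_nonneg fun ω => by positivity
  have hquad := mul_le_mul_of_nonneg_left hsecond (by positivity : 0 ≤ L / 2 * η ^ 2)
  have habsorb :=
    mul_le_mul_of_nonneg_right hη (by positivity : 0 ≤ η / 2 * ∫ ω, ‖g (X ω)‖ ^ 2 ∂μ)
  rw [hinner] at hstep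
  linarith

end SmoothDescent

theorem baseline_sgd_convergence_general
    {N : ℕ}
    (F : EuclideanSpace ℝ (Fin N) → ℝ) (hFdiff : Differentiable ℝ F)
    (L : ℝ) (hL : 0 < L)
    (hsmooth : ∀ x y : EuclideanSpace ℝ (Fin N),
      F y ≤ F x + ⟪gradient F x, y - x⟫ + L / 2 * ‖y - x‖ ^ 2)
    (Fstar : ℝ) (hFstar : ∀ x, Fstar ≤ F x)
    {Ω : Type*} [MeasurableSpace Ω] (μ : Measure Ω) [IsProbabilityMeasure μ]
    (T : ℕ) (hT : 1 ≤ T)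
    (M σ η : ℝ) (hM : 1 ≤ M)
    (hη0 : 0 < η) (hη : η ≤ 1 / (L * (1 + 1 / M)))
    (θ Δ : ℕ → Ω → EuclideanSpace ℝ (Fin N))
    (hθmeas : ∀ t ∈ Finset.Icc 1 (T + 1), Measurable (θ t))
    (x₁ : EuclideanSpace ℝ (Fin N)) (hθ1 : ∀ᵐ ω ∂μ, θ 1 ω = x₁)
    (hstep : ∀ t ∈ Finset.Icc 1 T, ∀ᵐ ω ∂μ, θ (t + 1) ω = θ t ω - η • Δ t ω)
    (hcond1 : ∀ t ∈ Finset.Icc 1 T,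
      μ[fun ω => ⟪gradient F (θ t ω), Δ t ω⟫ |
          MeasurableSpace.comap (θ t) inferInstance]
        =ᵐ[μ] fun ω => ‖gradient F (θ t ω)‖ ^ 2)
    (hcond2 : ∀ t ∈ Finset.Icc 1 T, ∀ᵐ ω ∂μ,
      (μ[fun ω' => ‖Δ t ω'‖ ^ 2 | MeasurableSpace.comap (θ t) inferInstance]) ω ≤
        (1 + 1 / M) * ‖gradient F (θ t ω)‖ ^ 2 + σ ^ 2 / M)
    (hint : ∀ t ∈ Finset.Icc 1 T,
      Integrable (fun ω => F (θ t ω)) μ ∧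
      Integrable (fun ω => ‖gradient F (θ t ω)‖ ^ 2) μ ∧
      Integrable (fun ω => ⟪gradient F (θ t ω), Δ t ω⟫) μ ∧
      Integrable (fun ω => ‖Δ t ω‖ ^ 2) μ) :
    (1 / (T : ℝ)) * ∑ t ∈ Finset.Icc 1 T, ∫ ω, ‖gradient F (θ t ω)‖ ^ 2 ∂μ ≤
      2 * (F x₁ - Fstar) / (η * T) + L * η * σ ^ 2 / M := by
  have hstepsize : η * L * (1 + 1 / M) ≤ 1 := by
    rwa [le_div_iff₀ (by positivity), ← mul_assoc] at hη
  have hdesc : ∀ t ∈ Finset.Icc 1 T, Integrable (fun ω => F (θ (t + 1) ω)) μ ∧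
      ∫ ω, F (θ (t + 1) ω) ∂μ ≤ ∫ ω, F (θ t ω) ∂μ -
        η / 2 * (∫ ω, ‖gradient F (θ t ω)‖ ^ 2 ∂μ - L * η * (σ ^ 2 / M)) := by
    intro t ht
    obtain ⟨hF, hg, hgΔ, hΔ⟩ := hint t ht
    have hθt := hθmeas t (Finset.Icc_subset_Icc_right T.le_succ ht)
    have hθt' := hθmeas (t + 1) (by simp only [Finset.mem_Icc] at ht ⊢; omega)
    exact integral_le_of_sgd_step hsmooth hFstar hL.le hη0.le hstepsize (hstep t ht)
      (hFdiff.continuous.measurable.comp hθt').aestronglyMeasurable hθt.comap_le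
      (hcond1 t ht) (hcond2 t ht) hF hg hgΔ hΔ
  have hstart : ∫ ω, F (θ 1 ω) ∂μ = F x₁ := by
    rw [integral_congr_ae (hθ1.mono fun ω h => congrArg F h), integral_const, probReal_univ,
      one_smul]
  have hend : Fstar ≤ ∫ ω, F (θ (T + 1) ω) ∂μ := by
    simpa using integral_mono (integrable_const Fstar)
      (hdesc T (Finset.right_mem_Icc.2 hT)).1 fun ω => hFstar _
  have := average_le_of_descent (A := fun t => ∫ ω, F (θ t ω) ∂μ)
    (G := fun t => ∫ ω, ‖gradient F (θ t ω)‖ ^ 2 ∂μ) hT hη0 (fun t ht => (hdesc t ht).2) hend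
  rwa [hstart, ← mul_div_assoc] at this

/-- **Baseline SGD convergence bound** (no-freezing baseline). -/
theorem baseline_sgd_convergence
    {N : ℕ} (hN : 1 ≤ N)
    (F : EuclideanSpace ℝ (Fin N) → ℝ) (hFdiff : Differentiable ℝ F)
    (L : ℝ) (hL : 0 < L)
    (hsmooth : ∀ x y : EuclideanSpace ℝ (Fin N),
      F y ≤ F x + ⟪gradient F x, y - x⟫ + L / 2 * ‖y - x‖ ^ 2)
    (Fstar : ℝ) (hFstar : ∀ x, Fstar ≤ F x)
    {Ω : Type*} [MeasurableSpace Ω] (μ : Measure Ω) [IsProbabilityMeasure μ]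
    (T : ℕ) (hT : 1 ≤ T)
    (M σ η : ℝ) (hM : 1 ≤ M) (hσ : 0 ≤ σ)
    (hη0 : 0 < η) (hη : η ≤ 1 / (L * (1 + 1 / M)))
    (θ Δ : ℕ → Ω → EuclideanSpace ℝ (Fin N))
    (hθmeas : ∀ t ∈ Finset.Icc 1 (T + 1), Measurable (θ t))
    (hΔmeas : ∀ t ∈ Finset.Icc 1 T, Measurable (Δ t))
    (x₁ : EuclideanSpace ℝ (Fin N)) (hθ1 : ∀ᵐ ω ∂μ, θ 1 ω = x₁)
    (hstep : ∀ t ∈ Finset.Icc 1 T, ∀ᵐ ω ∂μ, θ (t + 1) ω = θ t ω - η • Δ t ω)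
    (hcond1 : ∀ t ∈ Finset.Icc 1 T,
      μ[fun ω => ⟪gradient F (θ t ω), Δ t ω⟫ |
          MeasurableSpace.comap (θ t) inferInstance]
        =ᵐ[μ] fun ω => ‖gradient F (θ t ω)‖ ^ 2)
    (hcond2 : ∀ t ∈ Finset.Icc 1 T, ∀ᵐ ω ∂μ,
      (μ[fun ω' => ‖Δ t ω'‖ ^ 2 | MeasurableSpace.comap (θ t) inferInstance]) ω ≤
        (1 + 1 / M) * ‖gradient F (θ t ω)‖ ^ 2 + σ ^ 2 / M)
    (hint : ∀ t ∈ Finset.Icc 1 T,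
      Integrable (fun ω => F (θ t ω)) μ ∧
      Integrable (fun ω => ‖gradient F (θ t ω)‖ ^ 2) μ ∧
      Integrable (fun ω => ⟪gradient F (θ t ω), Δ t ω⟫) μ ∧
      Integrable (fun ω => ‖Δ t ω‖ ^ 2) μ) :
    (1 / (T : ℝ)) * ∑ t ∈ Finset.Icc 1 T, ∫ ω, ‖gradient F (θ t ω)‖ ^ 2 ∂μ ≤
      2 * (F x₁ - Fstar) / (η * T) + L * η * σ ^ 2 / M :=
  baseline_sgd_convergence_general F hFdiff L hL hsmooth Fstar hFstar μ T hT M σ η hM hη0 hη θ Δ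
    hθmeas x₁ hθ1 hstep hcond1 hcond2 hint
end
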